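/- For all real u, |cos((1-i)u)| > 2^{-3/2}·e^{|u|}. -/

import Mathlib

/-!
Since `‖cos z‖² = (cos (2 re z) + cosh (2 im z)) / 2`, squaring reduces the claim to
`e^|t| < 4 (cos t + cosh t)` for `t = 2u`. Because `2 cosh t > e^|t|`, it suffices that
`cosh t + 2 cos t ≥ 0`: for `t² ≤ 4` add the Taylor bounds `cosh t ≥ 1 + t²/2` and
`cos t ≥ 1 - t²/2`; for `t² ≥ 4` the first bound gives `cosh t ≥ 3`.
-/

open Complex

namespace Real

lemma one_add_sq_div_two_le_cosh (x : ℝ) : 1 + x ^ 2 / 2 ≤ cosh x := by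
  have := sum_le_hasSum (Finset.range 2) (fun n _ => by rw [pow_mul]; positivity) (hasSum_cosh x)
  simpa [Finset.sum_range_succ] using this

lemma cosh_add_two_mul_cos_nonneg (x : ℝ) : 0 ≤ cosh x + 2 * cos x := by
  have hcosh := one_add_sq_div_two_le_cosh x
  rcases le_total (x ^ 2) 4 with hx | hx
  · linarith [one_sub_sq_div_two_le_cos (x := x)]
  · linarith [neg_one_le_cos x]

lemma exp_abs_lt_four_mul_cos_add_cosh (x : ℝ) : exp |x| < 4 * (cos x + cosh x) := by
  have hcosh : 2 * cosh x = exp |x| + exp (-|x|) := by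
    rw [← cosh_abs, cosh_eq]; ring
  linarith [cosh_add_two_mul_cos_nonneg x, exp_pos (-|x|)]

end Real

theorem Complex.sq_norm_cos (z : ℂ) :
    ‖cos z‖ ^ 2 = (Real.cos (2 * z.re) + Real.cosh (2 * z.im)) / 2 := by
  have hcos : cos z = (Real.cos z.re * Real.cosh z.im : ℝ)
      + (-(Real.sin z.re * Real.sinh z.im) : ℝ) * I := by
    conv_lhs => rw [← re_add_im z]
    rw [cos_add_mul_I]
    push_cast
    ring
  rw [hcos, Complex.sq_norm, normSq_add_mul_I, Real.cos_two_mul, Real.cosh_two_mul]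
  linear_combination Real.sinh z.im ^ 2 * Real.sin_sq_add_cos_sq z.re
    + (Real.cos z.re ^ 2 - 1 / 2) * Real.cosh_sq z.im

/-- For all real `u`, `|cos((1-i)u)| > 2^(-3/2)·e^{|u|}`. -/
theorem stmt_3 (u : ℝ) :
    ‖Complex.cos ((1 - Complex.I) * u)‖ > (2:ℝ) ^ (-(3:ℝ)/2) * Real.exp |u| := by
  have hnorm : ‖cos ((1 - I) * u)‖ ^ 2 = (Real.cos (2 * u) + Real.cosh (2 * u)) / 2 := by
    simp [sq_norm_cos]
  have hrhs : ((2:ℝ) ^ (-(3:ℝ)/2) * Real.exp |u|) ^ 2 = Real.exp |2 * u| / 8 := by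
    rw [mul_pow, ← Real.rpow_natCast, ← Real.rpow_mul (by norm_num), ← Real.exp_nat_mul,
      abs_mul, abs_two]
    norm_num [div_eq_inv_mul]
  rw [gt_iff_lt, ← pow_lt_pow_iff_left₀ (by positivity) (norm_nonneg _) two_ne_zero, hnorm, hrhs]
  linarith [Real.exp_abs_lt_four_mul_cos_add_cosh (2 * u)]
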